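/- Let G be a finite subgroup of the orthogonal group O(n) of ℝⁿ such that every g ∈ G with g ≠ I has no fixed vector in ℝⁿ other than 0. Then there exists an injective group homomorphism ρ from G into the group of surjective linear isometries of the real Hilbert space ℓ² = ℓ²(ℕ;ℝ) such that for every g ≠ I the operator ρ(g) has no fixed vector other than 0; consequently the induced action of G on the unit sphere of ℓ² is free, isometric and properly discontinuous. -/

import Mathlib

/-!
A nonidentity `g ∈ G` acts diagonally on `ℓ²(ℕ, ℝⁿ)`, and a vector fixed by this diagonal action
has every coordinate fixed by `g`, hence vanishes. For `n ≥ 1` (for `n = 0` the group is trivial),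
placing an orthonormal basis of `ℝⁿ` in each coordinate gives a Hilbert basis of `ℓ²(ℕ, ℝⁿ)`
indexed by `ℕ × Fin n ≃ ℕ`, so `ℓ²(ℕ, ℝⁿ) ≅ ℓ²(ℕ, ℝ)`, and conjugating by this isometry transports
the diagonal action to `ℓ²`. A nonzero vector is never fixed, so the action on the unit sphere is
free; and any action of a finite group by isometries is properly discontinuous: balls of radius
half the least distance between a point and the orbit points different from it separate
everything.
-/


/-- An action (given as a family of maps `a g : X → X`) of a group `G` on a topological
space `X` is properly discontinuous if:
(1) points in different orbits can be separated by open sets `U`, `V` with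
    `a g '' U ∩ V = ∅` for all `g`;
(2) every stabilizer is finite;
(3) every point has an open neighborhood `U`, stable under its stabilizer, with
    `a g '' U ∩ U = ∅` for every `g` outside the stabilizer. -/
def IsProperlyDiscontinuousAction {G X : Type*} [TopologicalSpace X]
    (a : G → X → X) : Prop :=
  (∀ x y : X, (∀ g : G, a g x ≠ y) →
    ∃ U V : Set X, IsOpen U ∧ IsOpen V ∧ x ∈ U ∧ y ∈ V ∧
      ∀ g : G, (a g '' U) ∩ V = ∅) ∧
  (∀ x : X, {g : G | a g x = x}.Finite) ∧
  (∀ x : X, ∃ U : Set X, IsOpen U ∧ x ∈ U ∧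
    (∀ g : G, a g x = x → a g '' U ⊆ U) ∧
    ∀ g : G, a g x ≠ x → (a g '' U) ∩ U = ∅)

open Metric Topology
open scoped ENNReal lp

namespace lp

variable {α : Type*} {E F : α → Type*} [∀ i, NormedAddCommGroup (E i)]
  [∀ i, NormedAddCommGroup (F i)] {p : ℝ≥0∞}

theorem norm_eq_of_forall_norm_eq {f : lp E p} {g : lp F p} (h : ∀ i, ‖f i‖ = ‖g i‖) :
    ‖f‖ = ‖g‖ := by
  rcases p.trichotomy with (rfl | rfl | hp)
  · have hsupp : {i | f i ≠ 0} = {i | g i ≠ 0} := by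
      ext i
      simp only [Set.mem_ofPred_eq, ← norm_ne_zero_iff (a := f i), h, norm_ne_zero_iff]
    rw [norm_eq_card_dsupport, norm_eq_card_dsupport,
      ← Set.ncard_eq_toFinset_card _ (lp.memℓp f).finite_dsupport,
      ← Set.ncard_eq_toFinset_card _ (lp.memℓp g).finite_dsupport, hsupp]
  · cases isEmpty_or_nonempty α
    · simp only [lp.eq_zero' f, lp.eq_zero' g, norm_zero]
    apply (lp.isLUB_norm f).unique
    simpa only [h] using lp.isLUB_norm g
  · refine Real.rpow_left_injOn hp.ne' (norm_nonneg' _) (norm_nonneg' _) ?_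
    apply (lp.hasSum_norm hp f).unique
    simpa only [h] using lp.hasSum_norm hp g

end lp

namespace LinearIsometryEquiv

section lp

variable {𝕜 ι E F : Type*} [NormedField 𝕜] [NormedAddCommGroup E] [NormedSpace 𝕜 E]
  [NormedAddCommGroup F] [NormedSpace 𝕜 F] {p : ℝ≥0∞}

theorem memℓp_comp (e : E ≃ₗᵢ[𝕜] F) (f : lp (fun _ : ι => E) p) :
    Memℓp (fun i => e (f i)) p :=
  .of_norm (by simpa only [norm_map] using (lp.memℓp f).norm)

variable [Fact (1 ≤ p)]

variable (ι p) in
def lpMap (e : E ≃ₗᵢ[𝕜] F) : lp (fun _ : ι => E) p ≃ₗᵢ[𝕜] lp (fun _ : ι => F) p where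
  toFun f := ⟨fun i => e (f i), e.memℓp_comp f⟩
  invFun f := ⟨fun i => e.symm (f i), e.symm.memℓp_comp f⟩
  map_add' f g := lp.ext <| funext fun i => map_add e (f i) (g i)
  map_smul' c f := lp.ext <| funext fun i => e.map_smul c (f i)
  left_inv f := lp.ext <| funext fun i => e.symm_apply_apply (f i)
  right_inv f := lp.ext <| funext fun i => e.apply_symm_apply (f i)
  norm_map' f := lp.norm_eq_of_forall_norm_eq fun i => e.norm_map (f i)

@[simp]
theorem lpMap_apply (e : E ≃ₗᵢ[𝕜] F) (f : lp (fun _ : ι => E) p) (i : ι) :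
    e.lpMap ι p f i = e (f i) := rfl

variable (ι p) in
def lpMapHom : (E ≃ₗᵢ[𝕜] E) →* (lp (fun _ : ι => E) p ≃ₗᵢ[𝕜] lp (fun _ : ι => E) p) where
  toFun e := e.lpMap ι p
  map_one' := rfl
  map_mul' _ _ := rfl

theorem eq_zero_of_lpMap_apply_eq_self {e : E ≃ₗᵢ[𝕜] E} (he : ∀ x, e x = x → x = 0)
    {f : lp (fun _ : ι => E) p} (hf : e.lpMap ι p f = f) : f = 0 :=
  lp.ext <| funext fun i => he _ (by rw [← lpMap_apply, hf])

end lp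

variable {R E F : Type*} [Semiring R] [SeminormedAddCommGroup E] [Module R E]
  [SeminormedAddCommGroup F] [Module R F]

def conj (Φ : E ≃ₗᵢ[R] F) : (E ≃ₗᵢ[R] E) ≃* (F ≃ₗᵢ[R] F) where
  toFun g := (Φ.symm.trans g).trans Φ
  invFun h := (Φ.trans h).trans Φ.symm
  left_inv g := ext fun x => by simp
  right_inv h := ext fun x => by simp
  map_mul' g h := ext fun x => by simp

theorem conj_apply (Φ : E ≃ₗᵢ[R] F) (g : E ≃ₗᵢ[R] E) (x : F) :
    Φ.conj g x = Φ (g (Φ.symm x)) := rfl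

theorem eq_zero_of_conj_apply_eq_self {Φ : E ≃ₗᵢ[R] F} {g : E ≃ₗᵢ[R] E}
    (hg : ∀ x, g x = x → x = 0) {x : F} (hx : Φ.conj g x = x) : x = 0 :=
  Φ.symm.map_eq_zero_iff.1 <|
    hg _ (by simpa only [conj_apply, symm_apply_apply] using congrArg Φ.symm hx)

end LinearIsometryEquiv

namespace HilbertBasis

variable {ι ι' κ 𝕜 E : Type*} [RCLike 𝕜] [NormedAddCommGroup E] [InnerProductSpace 𝕜 E]

theorem orthonormal_lp_single [DecidableEq ι] (b : HilbertBasis κ 𝕜 E) :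
    Orthonormal 𝕜 fun q : ι × κ => lp.single (E := fun _ : ι => E) 2 q.1 (b q.2) := by
  classical
  rw [orthonormal_iff_ite]
  rintro ⟨k, i⟩ ⟨k', i'⟩
  rw [lp.inner_single_left, lp.single_apply]
  rcases eq_or_ne k k' with rfl | hk
  · simpa using orthonormal_iff_ite.mp b.orthonormal i i'
  · simp [hk]

variable [CompleteSpace E]

protected noncomputable def reindex (b : HilbertBasis ι 𝕜 E) (e : ι' ≃ ι) :
    HilbertBasis ι' 𝕜 E :=
  HilbertBasis.mk (b.orthonormal.comp e e.injective) <| by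
    rw [Set.range_comp, e.range_eq_univ, Set.image_univ]
    exact b.dense_span.ge

variable (ι) in
protected noncomputable def lpSingle [DecidableEq ι] (b : HilbertBasis κ 𝕜 E) :
    HilbertBasis (ι × κ) 𝕜 ℓ²(ι, E) :=
  HilbertBasis.mkOfOrthogonalEqBot b.orthonormal_lp_single <| by
    refine (Submodule.eq_bot_iff _).2 fun x hx => lp.ext <| funext fun k => ?_
    refine b.repr.map_eq_zero_iff.1 <| lp.ext <| funext fun i => ?_
    rw [b.repr_apply_apply, lp.coeFn_zero, Pi.zero_apply,
      ← lp.inner_single_left (G := fun _ : ι => E)]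
    exact Submodule.inner_right_of_mem_orthogonal
      (Submodule.subset_span (Set.mem_range_self (k, i))) hx

end HilbertBasis

theorem nonempty_lp_euclideanSpace_linearIsometryEquiv {n : ℕ} (hn : n ≠ 0) :
    Nonempty (ℓ²(ℕ, EuclideanSpace ℝ (Fin n)) ≃ₗᵢ[ℝ] ℓ²(ℕ, ℝ)) := by
  have : Nonempty (Fin n) := ⟨⟨0, Nat.pos_of_ne_zero hn⟩⟩
  have := Denumerable.ofEncodableOfInfinite (ℕ × Fin n)
  exact ⟨(((EuclideanSpace.basisFun (Fin n) ℝ).toHilbertBasis.lpSingle ℕ).reindex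
    (Denumerable.eqv (ℕ × Fin n)).symm).repr⟩

theorem exists_lp_representation_of_forall_apply_eq_self_imp_eq_zero (n : ℕ)
    (G : Subgroup (EuclideanSpace ℝ (Fin n) ≃ₗᵢ[ℝ] EuclideanSpace ℝ (Fin n)))
    (hfix : ∀ g ∈ G, g ≠ 1 → ∀ v : EuclideanSpace ℝ (Fin n), g v = v → v = 0) :
    ∃ ρ : G →* (ℓ²(ℕ, ℝ) ≃ₗᵢ[ℝ] ℓ²(ℕ, ℝ)), ∀ g : G, g ≠ 1 → ∀ v, ρ g v = v → v = 0 := by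
  rcases eq_or_ne n 0 with rfl | hn
  · refine ⟨1, fun g hg => (hg ?_).elim⟩
    exact Subtype.ext (LinearIsometryEquiv.ext fun _ => Subsingleton.elim _ _)
  obtain ⟨Φ⟩ := nonempty_lp_euclideanSpace_linearIsometryEquiv hn
  refine ⟨Φ.conj.toMonoidHom.comp ((LinearIsometryEquiv.lpMapHom ℕ 2).comp G.subtype),
    fun g hg v hv => Φ.eq_zero_of_conj_apply_eq_self (fun f => ?_) hv⟩
  exact LinearIsometryEquiv.eq_zero_of_lpMap_apply_eq_self (hfix g g.2 (by simpa using hg))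

theorem MonoidHom.injective_of_forall_apply_eq_self_imp_eq_zero {G R E : Type*} [Group G]
    [Semiring R] [SeminormedAddCommGroup E] [Module R E] [Nontrivial E]
    (ρ : G →* (E ≃ₗᵢ[R] E)) (hρ : ∀ g, g ≠ 1 → ∀ v, ρ g v = v → v = 0) :
    Function.Injective ρ := by
  refine (injective_iff_map_eq_one ρ).2 fun g hg => by_contra fun hg1 => ?_
  obtain ⟨v, hv⟩ := exists_ne (0 : E)
  exact hv (hρ g hg1 v (by rw [hg]; rfl))

theorem exists_pos_le_dist_of_ne {ι X : Type*} [Finite ι] [MetricSpace X] (f : ι → X) (y : X) :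
    ∃ r > 0, ∀ i, f i ≠ y → r ≤ dist (f i) y := by
  have h : ∀ᶠ r in 𝓝[>] (0 : ℝ), ∀ i, f i ≠ y → r ≤ dist (f i) y := by
    refine Filter.eventually_all.2 fun i => ?_
    by_cases hi : f i = y
    · exact .of_forall fun _ h => (h hi).elim
    · exact nhdsWithin_le_nhds <| (eventually_lt_nhds (dist_pos.2 hi)).mono fun _ h _ => h.le
  exact (h.and self_mem_nhdsWithin).exists.imp fun r h => ⟨h.2, h.1⟩

theorem Isometry.image_ball_inter_ball_eq_empty {X : Type*} [PseudoMetricSpace X] {f : X → X}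
    (hf : Isometry f) {x y : X} {r : ℝ} (hr : 2 * r ≤ dist (f x) y) :
    f '' ball x r ∩ ball y r = ∅ := by
  refine Set.eq_empty_of_forall_notMem ?_
  rintro _ ⟨⟨u, hu, rfl⟩, hv⟩
  have := dist_triangle (f x) (f u) y
  rw [hf.dist_eq, dist_comm x u] at this
  rw [mem_ball] at hu hv
  linarith

theorem isProperlyDiscontinuousAction_of_isometry {G X : Type*} [Finite G] [MetricSpace X]
    {a : G → X → X} (ha : ∀ g, Isometry (a g)) : IsProperlyDiscontinuousAction a := by
  refine ⟨fun x y hxy => ?_, fun x => Set.toFinite _, fun x => ?_⟩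
  · obtain ⟨r, hr, hdist⟩ := exists_pos_le_dist_of_ne (a · x) y
    refine ⟨ball x (r / 2), ball y (r / 2), isOpen_ball, isOpen_ball,
      mem_ball_self (by positivity), mem_ball_self (by positivity),
      fun g => (ha g).image_ball_inter_ball_eq_empty ?_⟩
    linarith [hdist g (hxy g)]
  · obtain ⟨r, hr, hdist⟩ := exists_pos_le_dist_of_ne (a · x) x
    refine ⟨ball x (r / 2), isOpen_ball, mem_ball_self (by positivity), fun g hg => ?_,
      fun g hg => (ha g).image_ball_inter_ball_eq_empty ?_⟩
    · simpa only [hg] using ((ha g).mapsTo_ball x (r / 2)).image_subset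
    · linarith [hdist g hg]

/-- A finite subgroup `G` of the orthogonal group `O(n)` all of whose
nonidentity elements have no nonzero fixed vector embeds into the group of surjective
linear isometries of `ℓ² = ℓ²(ℕ; ℝ)` in such a way that nonidentity elements have no
nonzero fixed vector; consequently the induced action of `G` on the unit sphere of `ℓ²`
is free, isometric and properly discontinuous. -/
theorem statement6 (n : ℕ)
    (G : Subgroup (EuclideanSpace ℝ (Fin n) ≃ₗᵢ[ℝ] EuclideanSpace ℝ (Fin n)))
    (hGfin : Finite G)
    (hfix : ∀ g ∈ G, g ≠ 1 → ∀ v : EuclideanSpace ℝ (Fin n), g v = v → v = 0) :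
    ∃ ρ : G →* (lp (fun _ : ℕ => ℝ) 2 ≃ₗᵢ[ℝ] lp (fun _ : ℕ => ℝ) 2),
      Function.Injective ρ ∧
      (∀ g : G, g ≠ 1 → ∀ v : lp (fun _ : ℕ => ℝ) 2, ρ g v = v → v = 0) ∧
      ∃ a : G → Metric.sphere (0 : lp (fun _ : ℕ => ℝ) 2) 1 →
            Metric.sphere (0 : lp (fun _ : ℕ => ℝ) 2) 1,
        (∀ (g : G) (p : Metric.sphere (0 : lp (fun _ : ℕ => ℝ) 2) 1),
            (a g p : lp (fun _ : ℕ => ℝ) 2) = ρ g (p : lp (fun _ : ℕ => ℝ) 2)) ∧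
        (∀ g : G, Isometry (a g)) ∧
        (∀ (g : G) (p), a g p = p → g = 1) ∧
        IsProperlyDiscontinuousAction a := by
  obtain ⟨ρ, hρ⟩ := exists_lp_representation_of_forall_apply_eq_self_imp_eq_zero n G hfix
  have : Nontrivial ℓ²(ℕ, ℝ) :=
    nontrivial_of_ne (lp.single 2 0 1) 0 (norm_ne_zero_iff.1 (by simp [lp.norm_single]))
  let a (g : G) (p : sphere (0 : ℓ²(ℕ, ℝ)) 1) : sphere (0 : ℓ²(ℕ, ℝ)) 1 :=
    ⟨ρ g p, by simp⟩
  have ha (g : G) : Isometry (a g) := fun p q => (ρ g).isometry p q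
  refine ⟨ρ, ρ.injective_of_forall_apply_eq_self_imp_eq_zero hρ, hρ, a, fun _ _ => rfl, ha,
    fun g p hp => by_contra fun hg => ?_, isProperlyDiscontinuousAction_of_isometry ha⟩
  exact ne_of_mem_sphere p.2 one_ne_zero (hρ g hg p (congrArg Subtype.val hp))
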